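/- arXiv:1004.4901 — 4 statements merged into one kernel-verified Lean document; each statement's English description precedes it below -/
import Mathlib

section
/- Let k ≥ 2. For j = 1,…,k let e_j be a closed segment in ℝ² with endpoints b_j and c_j, and let a_j and a'_j be points lying on e_j. For j = 1,…,k−1 let w_j ≥ 0 be real weights, and set w_0 = w_k = 0. Let ε > 0 and B ≥ 0, and suppose there is a subset V ⊆ {1,…,k} such that: (i) for every j ∉ V, ‖c_j − b_j‖ ≤ ε·‖a'_j − a'_{j−1}‖ whenever 2 ≤ j ≤ k, and ‖c_j − b_j‖ ≤ ε·‖a'_{j+1} − a'_j‖ whenever 1 ≤ j ≤ k−1; and (ii) Σ_{j∈V} (w_{j−1} + w_j)·‖c_j − b_j‖ ≤ 2εB. Then Σ_{j=1}^{k−1} w_j·‖a_{j+1} − a_j‖ ≤ (1+2ε)·Σ_{j=1}^{k−1} w_j·‖a'_{j+1} − a'_j‖ + 2εB. -/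
/-!
Since `a_j` and `a'_j` lie on the same edge `e_j = [b_j, c_j]`, the triangle inequality gives
`‖a_{j+1} - a_j‖ ≤ ‖c_j - b_j‖ + ‖a'_{j+1} - a'_j‖ + ‖c_{j+1} - b_{j+1}‖`. Summing with the weights
charges each edge `e_j` with `(w_{j-1} + w_j)‖c_j - b_j‖`. The edges in `V` are charged at most `2εB`
in total; any other edge is at most `ε` times each of its two neighbouring pieces of `l'`, so its
charge is at most `ε(w_{j-1}‖a'_j - a'_{j-1}‖ + w_j‖a'_{j+1} - a'_j‖)`, and these bounds add up to
`2ε·S(l')`.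
-/

open Finset

theorem dist_le_of_mem_segment {E : Type*} [SeminormedAddCommGroup E] [NormedSpace ℝ E]
    {p q x y : E} (hx : x ∈ segment ℝ p q) (hy : y ∈ segment ℝ p q) : dist x y ≤ dist p q := by
  rw [← convexHull_pair] at hx hy
  rw [← Metric.diam_pair (x := p), ← convexHull_diam]
  exact Metric.dist_le_diam_of_mem (isBounded_convexHull.2 (Set.toFinite _).isBounded) hx hy

theorem norm_sub_le_of_mem_segments {E : Type*} [SeminormedAddCommGroup E] [NormedSpace ℝ E]
    {p q r s x x' y y' : E} (hx : x ∈ segment ℝ p q) (hx' : x' ∈ segment ℝ p q)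
    (hy : y ∈ segment ℝ r s) (hy' : y' ∈ segment ℝ r s) :
    ‖y - x‖ ≤ ‖q - p‖ + ‖y' - x'‖ + ‖s - r‖ := by
  have := dist_triangle4 y y' x' x
  have := dist_le_of_mem_segment hy hy'
  have := dist_le_of_mem_segment hx' hx
  simp only [dist_eq_norm] at *
  rw [norm_sub_rev r, norm_sub_rev p] at *
  linarith

section IntervalSums

variable {M : Type*} [AddCommMonoid M] {k : ℕ}

theorem sum_Icc_one_eq_sum_Icc_pred {f : ℕ → M} (hf : f k = 0) :
    ∑ j ∈ Icc 1 k, f j = ∑ j ∈ Icc 1 (k - 1), f j := by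
  cases k with
  | zero => rfl
  | succ n => rw [sum_Icc_succ_top (by omega), hf, add_zero, Nat.add_sub_cancel]

theorem sum_Icc_one_eq_sum_Icc_succ {f : ℕ → M} (hf : f 1 = 0) :
    ∑ j ∈ Icc 1 k, f j = ∑ j ∈ Icc 1 (k - 1), f (j + 1) := by
  cases k with
  | zero => rfl
  | succ n =>
    rw [← Ico_add_one_right_eq_Icc, sum_eq_sum_Ico_succ_bot (by omega), hf, zero_add,
      Nat.add_sub_cancel, ← Ico_add_one_right_eq_Icc, sum_Ico_add']

theorem sum_Icc_add_succ {P Q : ℕ → M} (hP : P k = 0) (hQ : Q 1 = 0) :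
    ∑ j ∈ Icc 1 (k - 1), (P j + Q (j + 1)) = ∑ j ∈ Icc 1 k, (P j + Q j) := by
  rw [sum_add_distrib, sum_add_distrib, sum_Icc_one_eq_sum_Icc_pred hP,
    sum_Icc_one_eq_sum_Icc_succ hQ]

end IntervalSums

section WeightedSums

variable {k : ℕ} {w : ℕ → ℝ}

theorem sum_Icc_mul_add_succ (d : ℕ → ℝ) (hw0 : w 0 = 0) (hwk : w k = 0) :
    ∑ j ∈ Icc 1 (k - 1), w j * (d j + d (j + 1)) = ∑ j ∈ Icc 1 k, (w (j - 1) + w j) * d j := by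
  have := sum_Icc_add_succ (k := k) (P := fun j ↦ w j * d j) (Q := fun j ↦ w (j - 1) * d j)
    (by simp [hwk]) (by simp [hw0])
  simp only [add_tsub_cancel_right] at this
  simp only [mul_add, add_mul, this, add_comm]

theorem sum_Icc_pred_add (F : ℕ → ℝ) (h0 : F 0 = 0) (hk : F k = 0) :
    ∑ j ∈ Icc 1 k, (F (j - 1) + F j) = 2 * ∑ j ∈ Icc 1 (k - 1), F j := by
  have := sum_Icc_add_succ (k := k) (P := F) (Q := fun j ↦ F (j - 1)) hk (by simp [h0])
  simp only [add_tsub_cancel_right] at this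
  rw [two_mul, ← sum_add_distrib, this]
  exact sum_congr rfl fun _ _ ↦ add_comm _ _

theorem nonneg_of_le_of_boundary_eq_zero (hw : ∀ j ∈ Icc 1 (k - 1), 0 ≤ w j) (hw0 : w 0 = 0)
    (hwk : w k = 0) {j : ℕ} (hj : j ≤ k) : 0 ≤ w j := by
  rcases Nat.eq_zero_or_pos j with rfl | hj0
  · exact hw0.ge
  rcases hj.eq_or_lt with rfl | hjk
  · exact hwk.ge
  exact hw j (mem_Icc.2 ⟨hj0, by omega⟩)

theorem mul_le_mul_of_imp_of_not_imp_eq_zero {p : Prop} {x y z ε : ℝ} (hz : 0 ≤ z)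
    (h : p → x ≤ ε * y) (hnp : ¬p → z = 0) : z * x ≤ ε * (z * y) := by
  by_cases hp : p
  · calc z * x ≤ z * (ε * y) := mul_le_mul_of_nonneg_left (h hp) hz
      _ = ε * (z * y) := mul_left_comm _ _ _
  · simp [hnp hp]

theorem sum_sdiff_mul_le {d L : ℕ → ℝ} {ε : ℝ} {V : Finset ℕ} (hL : ∀ j, 0 ≤ L j)
    (hw : ∀ j ∈ Icc 1 (k - 1), 0 ≤ w j) (hw0 : w 0 = 0) (hwk : w k = 0) (hε : 0 ≤ ε)
    (hi : ∀ j ∈ Icc 1 k, j ∉ V →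
      (2 ≤ j → d j ≤ ε * L (j - 1)) ∧ (j ≤ k - 1 → d j ≤ ε * L j)) :
    ∑ j ∈ Icc 1 k \ V, (w (j - 1) + w j) * d j ≤ 2 * ε * ∑ j ∈ Icc 1 (k - 1), w j * L j := by
  have hw' {j : ℕ} (hj : j ≤ k) : 0 ≤ w j := nonneg_of_le_of_boundary_eq_zero hw hw0 hwk hj
  calc ∑ j ∈ Icc 1 k \ V, (w (j - 1) + w j) * d j
      ≤ ∑ j ∈ Icc 1 k \ V, ε * (w (j - 1) * L (j - 1) + w j * L j) := by
        refine sum_le_sum fun j hj ↦ ?_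
        obtain ⟨hjk, hjV⟩ := mem_sdiff.1 hj
        have hj := mem_Icc.1 hjk
        have hprev := mul_le_mul_of_imp_of_not_imp_eq_zero (hw' (j := j - 1) (by omega))
          (hi j hjk hjV).1 fun _ ↦ by rw [show j - 1 = 0 by omega, hw0]
        have hnext := mul_le_mul_of_imp_of_not_imp_eq_zero (hw' hj.2)
          (hi j hjk hjV).2 fun _ ↦ by rw [show j = k by omega, hwk]
        linarith
    _ ≤ ∑ j ∈ Icc 1 k, ε * (w (j - 1) * L (j - 1) + w j * L j) := by
        refine sum_le_sum_of_subset_of_nonneg sdiff_subset fun j hj _ ↦ ?_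
        have hj := mem_Icc.1 hj
        exact mul_nonneg hε <| add_nonneg (mul_nonneg (hw' (by omega)) (hL _))
          (mul_nonneg (hw' hj.2) (hL _))
    _ = 2 * ε * ∑ j ∈ Icc 1 (k - 1), w j * L j := by
        rw [← mul_sum, sum_Icc_pred_add (fun j ↦ w j * L j) (by simp [hw0]) (by simp [hwk])]
        ring

theorem sum_mul_le_of_le_add {d L L' : ℕ → ℝ} {ε B : ℝ} {V : Finset ℕ}
    (hw : ∀ j ∈ Icc 1 (k - 1), 0 ≤ w j) (hw0 : w 0 = 0) (hwk : w k = 0) (hε : 0 ≤ ε)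
    (hV : V ⊆ Icc 1 k) (hL' : ∀ j, 0 ≤ L' j)
    (hpiece : ∀ j ∈ Icc 1 (k - 1), L j ≤ d j + L' j + d (j + 1))
    (hi : ∀ j ∈ Icc 1 k, j ∉ V →
      (2 ≤ j → d j ≤ ε * L' (j - 1)) ∧ (j ≤ k - 1 → d j ≤ ε * L' j))
    (hii : ∑ j ∈ V, (w (j - 1) + w j) * d j ≤ 2 * ε * B) :
    ∑ j ∈ Icc 1 (k - 1), w j * L j ≤
      (1 + 2 * ε) * ∑ j ∈ Icc 1 (k - 1), w j * L' j + 2 * ε * B := by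
  have hfar := sum_sdiff_mul_le hL' hw hw0 hwk hε hi
  calc ∑ j ∈ Icc 1 (k - 1), w j * L j
      ≤ ∑ j ∈ Icc 1 (k - 1), (w j * L' j + w j * (d j + d (j + 1))) :=
        sum_le_sum fun j hj ↦ by
          rw [← mul_add]
          exact mul_le_mul_of_nonneg_left (by linarith [hpiece j hj]) (hw j hj)
    _ = ∑ j ∈ Icc 1 (k - 1), w j * L' j +
          (∑ j ∈ Icc 1 k \ V, (w (j - 1) + w j) * d j + ∑ j ∈ V, (w (j - 1) + w j) * d j) := by
        rw [sum_add_distrib, sum_Icc_mul_add_succ d hw0 hwk, sum_sdiff hV]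
    _ ≤ (1 + 2 * ε) * ∑ j ∈ Icc 1 (k - 1), w j * L' j + 2 * ε * B := by linarith

end WeightedSums

theorem weighted_length_comparison_general
    (k : ℕ)
    (b c a a' : ℕ → EuclideanSpace ℝ (Fin 2))
    (ha : ∀ j ∈ Finset.Icc 1 k, a j ∈ segment ℝ (b j) (c j))
    (ha' : ∀ j ∈ Finset.Icc 1 k, a' j ∈ segment ℝ (b j) (c j))
    (w : ℕ → ℝ) (hw : ∀ j ∈ Finset.Icc 1 (k - 1), 0 ≤ w j)
    (hw0 : w 0 = 0) (hwk : w k = 0)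
    (ε B : ℝ) (hε : 0 < ε)
    (V : Finset ℕ) (hV : V ⊆ Finset.Icc 1 k)
    (hi : ∀ j ∈ Finset.Icc 1 k, j ∉ V →
      (2 ≤ j → ‖c j - b j‖ ≤ ε * ‖a' j - a' (j - 1)‖) ∧
      (j ≤ k - 1 → ‖c j - b j‖ ≤ ε * ‖a' (j + 1) - a' j‖))
    (hii : ∑ j ∈ V, (w (j - 1) + w j) * ‖c j - b j‖ ≤ 2 * ε * B) :
    ∑ j ∈ Finset.Icc 1 (k - 1), w j * ‖a (j + 1) - a j‖ ≤
      (1 + 2 * ε) * ∑ j ∈ Finset.Icc 1 (k - 1), w j * ‖a' (j + 1) - a' j‖ + 2 * ε * B := by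
  have hpiece (j : ℕ) (hj : j ∈ Icc 1 (k - 1)) :
      ‖a (j + 1) - a j‖ ≤ ‖c j - b j‖ + ‖a' (j + 1) - a' j‖ + ‖c (j + 1) - b (j + 1)‖ := by
    obtain ⟨hj1, hjk⟩ := mem_Icc.1 hj
    have hj : j ∈ Icc 1 k := mem_Icc.2 ⟨hj1, by omega⟩
    have hj' : j + 1 ∈ Icc 1 k := mem_Icc.2 ⟨by omega, by omega⟩
    exact norm_sub_le_of_mem_segments (ha j hj) (ha' j hj) (ha _ hj') (ha' _ hj')
  have hi' (j : ℕ) (hj : j ∈ Icc 1 k) (hjV : j ∉ V) :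
      (2 ≤ j → ‖c j - b j‖ ≤ ε * ‖a' (j - 1 + 1) - a' (j - 1)‖) ∧
        (j ≤ k - 1 → ‖c j - b j‖ ≤ ε * ‖a' (j + 1) - a' j‖) := by
    rw [Nat.sub_add_cancel (mem_Icc.1 hj).1]
    exact hi j hj hjV
  exact sum_mul_le_of_le_add (d := fun j ↦ ‖c j - b j‖) (L' := fun j ↦ ‖a' (j + 1) - a' j‖)
    hw hw0 hwk hε.le hV (fun _ ↦ norm_nonneg _) hpiece hi' hii

/-- Lemma 1: two segments crossing the same ordered sequence of Steiner
edges `e_j = [b_j, c_j]` at points `a_j` and `a'_j` respectively, with region weights `w_j`,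
satisfy `S(l) ≤ (1+2ε)·S(l') + 2εB`. -/
theorem weighted_length_comparison
    (k : ℕ) (hk : 2 ≤ k)
    (b c a a' : ℕ → EuclideanSpace ℝ (Fin 2))
    (ha : ∀ j ∈ Finset.Icc 1 k, a j ∈ segment ℝ (b j) (c j))
    (ha' : ∀ j ∈ Finset.Icc 1 k, a' j ∈ segment ℝ (b j) (c j))
    (w : ℕ → ℝ) (hw : ∀ j ∈ Finset.Icc 1 (k - 1), 0 ≤ w j)
    (hw0 : w 0 = 0) (hwk : w k = 0)
    (ε B : ℝ) (hε : 0 < ε) (hB : 0 ≤ B)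
    (V : Finset ℕ) (hV : V ⊆ Finset.Icc 1 k)
    (hi : ∀ j ∈ Finset.Icc 1 k, j ∉ V →
      (2 ≤ j → ‖c j - b j‖ ≤ ε * ‖a' j - a' (j - 1)‖) ∧
      (j ≤ k - 1 → ‖c j - b j‖ ≤ ε * ‖a' (j + 1) - a' j‖))
    (hii : ∑ j ∈ V, (w (j - 1) + w j) * ‖c j - b j‖ ≤ 2 * ε * B) :
    ∑ j ∈ Finset.Icc 1 (k - 1), w j * ‖a (j + 1) - a j‖ ≤
      (1 + 2 * ε) * ∑ j ∈ Finset.Icc 1 (k - 1), w j * ‖a' (j + 1) - a' j‖ + 2 * ε * B :=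
  weighted_length_comparison_general k b c a a' ha ha' w hw hw0 hwk ε B hε V hV hi hii
end

section
/- Let v, p₀, p₁, q₀, q₁ ∈ ℝ², and define P(s) = p₀ + s·(p₁ − p₀) and Q(t) = q₀ + t·(q₁ − q₀) for s, t ∈ ℝ. Set c₀ = det(p₁ − p₀, q₁ − q₀), c₁ = det(p₁ − p₀, q₀ − v), c₂ = det(p₀ − v, q₁ − q₀), and c₃ = det(p₀ − v, q₀ − v). Then for all s, t ∈ ℝ, the three points v, P(s), Q(t) are collinear if and only if c₀·s·t + c₁·s + c₂·t + c₃ = 0. -/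
/-!
The point `v` lies on the line through `P(s)` and `Q(t)` exactly when the vectors `P(s) - v` and
`Q(t) - v` are parallel, i.e. when `det2 (P(s) - v) (Q(t) - v) = 0`. Both vectors are affine in
their parameter, so bilinearity of `det2` expands this determinant into `c₀st + c₁s + c₂t + c₃`.
-/

/-- The planar determinant `det((x₁,y₁),(x₂,y₂)) = x₁·y₂ − x₂·y₁`. -/
noncomputable def det2 (u w : ℝ × ℝ) : ℝ := u.1 * w.2 - w.1 * u.2

lemma det2_add_smul_add_smul (a b c d : ℝ × ℝ) (s t : ℝ) :
    det2 (a + s • b) (c + t • d) =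
      det2 b d * s * t + det2 b c * s + det2 a d * t + det2 a c := by
  simp only [det2, Prod.fst_add, Prod.snd_add, Prod.smul_fst, Prod.smul_snd, smul_eq_mul]
  ring

lemma exists_eq_smul_of_det2_eq_zero {u w : ℝ × ℝ} (hu : u ≠ 0) (h : det2 u w = 0) :
    ∃ r : ℝ, w = r • u := by
  obtain ⟨u₁, u₂⟩ := u
  obtain ⟨w₁, w₂⟩ := w
  simp only [det2] at h
  by_cases h₁ : u₁ = 0
  · have h₂ : u₂ ≠ 0 := fun h₂ => hu (by simp [h₁, h₂])
    refine ⟨w₂ / u₂, Prod.ext ?_ ?_⟩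
    · have : w₁ * u₂ = 0 := by simpa [h₁] using h
      simp [h₁, (mul_eq_zero.mp this).resolve_right h₂]
    · simp [h₂]
  · refine ⟨w₁ / u₁, Prod.ext ?_ ?_⟩
    · simp [h₁]
    · simp only [Prod.smul_snd, smul_eq_mul]
      field_simp
      linarith

lemma det2_eq_zero_iff_exists_smul (u w : ℝ × ℝ) :
    det2 u w = 0 ↔ ∃ x : ℝ × ℝ, ∃ r₁ r₂ : ℝ, u = r₁ • x ∧ w = r₂ • x := by
  constructor
  · intro h
    by_cases hu : u = 0
    · exact ⟨w, 0, 1, by simp [hu], by simp⟩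
    · obtain ⟨r, hr⟩ := exists_eq_smul_of_det2_eq_zero hu h
      exact ⟨u, 1, r, by simp, hr⟩
  · rintro ⟨x, r₁, r₂, rfl, rfl⟩
    simp only [det2, Prod.smul_fst, Prod.smul_snd, smul_eq_mul]
    ring

lemma collinear_iff_det2_sub_eq_zero (a b c : ℝ × ℝ) :
    Collinear ℝ ({a, b, c} : Set (ℝ × ℝ)) ↔ det2 (b - a) (c - a) = 0 := by
  rw [collinear_iff_of_mem (Set.mem_insert a _), det2_eq_zero_iff_exists_smul]
  simp only [Set.mem_insert_iff, Set.mem_singleton_iff, forall_eq_or_imp, forall_eq, vadd_eq_add, ← sub_eq_iff_eq_add]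
  constructor
  · rintro ⟨x, -, ⟨r₁, h₁⟩, r₂, h₂⟩
    exact ⟨x, r₁, r₂, h₁, h₂⟩
  · rintro ⟨x, r₁, r₂, h₁, h₂⟩
    exact ⟨x, ⟨0, by simp⟩, ⟨r₁, h₁⟩, r₂, h₂⟩

/-- Lemma 4: the leashes through a fixed point `v` correspond exactly to the
dual curve `c₀·st + c₁·s + c₂·t + c₃ = 0` in the parameter space. -/
theorem dual_curve_of_point
    (v p₀ p₁ q₀ q₁ : ℝ × ℝ) :
    ∀ s t : ℝ,
      Collinear ℝ ({v, p₀ + s • (p₁ - p₀), q₀ + t • (q₁ - q₀)} : Set (ℝ × ℝ)) ↔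
      det2 (p₁ - p₀) (q₁ - q₀) * s * t + det2 (p₁ - p₀) (q₀ - v) * s +
        det2 (p₀ - v) (q₁ - q₀) * t + det2 (p₀ - v) (q₀ - v) = 0 := by
  intro s t
  rw [collinear_iff_det2_sub_eq_zero, add_sub_right_comm p₀, add_sub_right_comm q₀,
    det2_add_smul_add_smul]
end

section
/- Let f, g : [0,1] → ℝ² be continuous maps and let b, c ∈ ℝ². Suppose that for every r ∈ [0,1]: b does not lie on the closed segment [f(r), g(r)], c does not lie on [f(r), g(r)], f(r) does not lie on the closed segment [b, c], and g(r) does not lie on [b, c]. Then the set {r ∈ [0,1] : [f(r), g(r)] ∩ [b, c] ≠ ∅} is either all of [0,1] or empty. -/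
open unitInterval Set

/-!
The parameters at which the segments meet form a closed set for any continuous family: it is the
projection of a closed subset of `I × I` along the compact second factor. Under the non-incidence
hypotheses, meeting is equivalent to the strict orientation test (`f r`, `g r` strictly on
opposite sides of the line `bc`, and `b`, `c` strictly on opposite sides of the line through
`f r`, `g r`), an open condition. A clopen subset of the connected `I` is `∅` or `univ`.
-/

lemma mul_neg_or_of_convexComb_eq_zero {a s u v : ℝ} (ha : 0 ≤ a) (hs : 0 ≤ s)
    (h : a * u + s * v = 0) : u * v < 0 ∨ (u = 0 ∧ v = 0) ∨ a = 0 ∨ s = 0 := by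
  by_contra! hcon
  obtain ⟨huv, hzero, ha0, hs0⟩ := hcon
  have hu : a * u ^ 2 + s * (u * v) = 0 := by linear_combination u * h
  have hv : s * v ^ 2 + a * (u * v) = 0 := by linear_combination v * h
  have hu0 : a * u ^ 2 = 0 := by nlinarith [mul_nonneg hs huv, mul_nonneg ha (sq_nonneg u)]
  have hv0 : s * v ^ 2 = 0 := by nlinarith [mul_nonneg ha huv, mul_nonneg hs (sq_nonneg v)]
  simp_all

lemma mem_Icc_of_convexComb_eq_zero {t u v : ℝ} (huv : u * v < 0)
    (h : (1 - t) * u + t * v = 0) : t ∈ Icc (0 : ℝ) 1 := by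
  have key : t * (u ^ 2 - u * v) = u ^ 2 := by linear_combination -u * h
  have hpos : 0 < u ^ 2 - u * v := by nlinarith [sq_nonneg u]
  constructor <;> nlinarith [sq_nonneg u, sq_nonneg v]

lemma exists_convexComb_eq_zero {u v : ℝ} (huv : u * v < 0) :
    ∃ t ∈ Icc (0 : ℝ) 1, (1 - t) * u + t * v = 0 := by
  have hne : u - v ≠ 0 := by
    intro h; rw [sub_eq_zero.mp h] at huv; nlinarith [sq_nonneg v]
  have h : (1 - u / (u - v)) * u + u / (u - v) * v = 0 := by field_simp; ring
  exact ⟨_, mem_Icc_of_convexComb_eq_zero huv h, h⟩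

lemma zero_mem_segment_of_inter_segment_zero_one {x u v : ℝ} (hx : x ∈ segment ℝ u v)
    (hx01 : x ∈ segment ℝ 0 1) (hu : u ∉ segment ℝ 0 1) (hv : v ∉ segment ℝ 0 1) :
    (0 : ℝ) ∈ segment ℝ u v := by
  simp only [segment_eq_uIcc, mem_uIcc] at *
  grind

/-- Twice the signed area of the triangle `b c x`; its sign tells on which side of the line `bc`
the point `x` lies. -/
def orient (b c x : ℝ × ℝ) : ℝ := (c.1 - b.1) * (x.2 - b.2) - (c.2 - b.2) * (x.1 - b.1)

@[fun_prop]
lemma Continuous.orient {X : Type*} [TopologicalSpace X] {b c x : X → ℝ × ℝ}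
    (hb : Continuous b) (hc : Continuous c) (hx : Continuous x) :
    Continuous fun r => _root_.orient (b r) (c r) (x r) := by
  unfold _root_.orient; fun_prop

lemma orient_convexComb (b c p q : ℝ × ℝ) {a s : ℝ} (h : a + s = 1) :
    orient b c (a • p + s • q) = a * orient b c p + s * orient b c q := by
  simp only [orient, Prod.fst_add, Prod.snd_add, Prod.smul_fst, Prod.smul_snd, smul_eq_mul]
  linear_combination (b.2 * c.1 - b.1 * c.2) * h

lemma orient_lineMap (b c p q : ℝ × ℝ) (t : ℝ) :
    orient b c (AffineMap.lineMap p q t) = (1 - t) * orient b c p + t * orient b c q := by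
  rw [AffineMap.lineMap_apply_module, orient_convexComb b c p q (sub_add_cancel 1 t)]

lemma orient_eq_zero_of_mem_segment {b c x : ℝ × ℝ} (hx : x ∈ segment ℝ b c) :
    orient b c x = 0 := by
  obtain ⟨a, t, -, -, hat, rfl⟩ := hx
  rw [orient_convexComb b c b c hat]
  simp only [orient]; ring

lemma exists_eq_lineMap_of_orient_eq_zero {b c x : ℝ × ℝ} (hbc : b ≠ c)
    (hx : orient b c x = 0) : ∃ t : ℝ, x = AffineMap.lineMap b c t := by
  have hd : (c.1 - b.1) ^ 2 + (c.2 - b.2) ^ 2 ≠ 0 := by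
    intro h0
    apply hbc
    ext <;> nlinarith [sq_nonneg (c.1 - b.1), sq_nonneg (c.2 - b.2)]
  -- the parameter of the orthogonal projection of `x` onto the line `bc`
  refine ⟨((c.1 - b.1) * (x.1 - b.1) + (c.2 - b.2) * (x.2 - b.2)) /
    ((c.1 - b.1) ^ 2 + (c.2 - b.2) ^ 2), ?_⟩
  simp only [orient] at hx
  rw [AffineMap.lineMap_apply_module']
  ext <;> simp only [Prod.fst_add, Prod.snd_add, Prod.smul_fst, Prod.smul_snd, Prod.fst_sub,
    Prod.snd_sub, smul_eq_mul] <;> field_simp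
  · linear_combination (-(c.2 - b.2)) * hx
  · linear_combination (c.1 - b.1) * hx

lemma left_mem_segment_of_orient_eq_zero {b c p q x : ℝ × ℝ} (hp0 : orient b c p = 0)
    (hq0 : orient b c q = 0) (hxpq : x ∈ segment ℝ p q) (hxbc : x ∈ segment ℝ b c)
    (hp : p ∉ segment ℝ b c) (hq : q ∉ segment ℝ b c) : b ∈ segment ℝ p q := by
  rcases eq_or_ne b c with rfl | hbc
  · rw [segment_same, mem_singleton_iff] at hxbc
    rwa [← hxbc]
  set L : ℝ →ᵃ[ℝ] ℝ × ℝ := AffineMap.lineMap b c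
  have hL : Function.Injective L := AffineMap.lineMap_injective ℝ hbc
  have hbc_eq : segment ℝ b c = L '' segment ℝ 0 1 := by
    rw [image_segment, AffineMap.lineMap_apply_zero, AffineMap.lineMap_apply_one]
  obtain ⟨u, rfl⟩ := exists_eq_lineMap_of_orient_eq_zero hbc hp0
  obtain ⟨v, rfl⟩ := exists_eq_lineMap_of_orient_eq_zero hbc hq0
  rw [← image_segment] at hxpq ⊢
  obtain ⟨x, hx, rfl⟩ := hxpq
  rw [hbc_eq, hL.mem_set_image] at hp hq hxbc
  exact ⟨0, zero_mem_segment_of_inter_segment_zero_one hx hxbc hp hq,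
    AffineMap.lineMap_apply_zero b c⟩

lemma orient_mul_orient_neg_of_mem_segment {b c p q x : ℝ × ℝ} (hxpq : x ∈ segment ℝ p q)
    (hxbc : x ∈ segment ℝ b c) (hb : b ∉ segment ℝ p q) (hp : p ∉ segment ℝ b c)
    (hq : q ∉ segment ℝ b c) : orient b c p * orient b c q < 0 := by
  obtain ⟨a, s, ha, hs, has, hx⟩ := hxpq
  have hx0 := orient_eq_zero_of_mem_segment hxbc
  rw [← hx, orient_convexComb b c p q has] at hx0
  rcases mul_neg_or_of_convexComb_eq_zero ha hs hx0 with hneg | ⟨hp0, hq0⟩ | rfl | rfl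
  · exact hneg
  · exact absurd
      (left_mem_segment_of_orient_eq_zero hp0 hq0 ⟨a, s, ha, hs, has, hx⟩ hxbc hp hq) hb
  · obtain rfl : s = 1 := by linarith
    simp only [zero_smul, one_smul, zero_add] at hx
    exact absurd (hx ▸ hxbc) hq
  · obtain rfl : a = 1 := by linarith
    simp only [zero_smul, one_smul, add_zero] at hx
    exact absurd (hx ▸ hxbc) hp

lemma segment_inter_nonempty_of_orient_mul_neg {b c p q : ℝ × ℝ}
    (hpq : orient b c p * orient b c q < 0) (hbc : orient p q b * orient p q c < 0) :
    (segment ℝ p q ∩ segment ℝ b c).Nonempty := by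
  obtain ⟨s, hs, hs0⟩ := exists_convexComb_eq_zero hpq
  have hb_ne_c : b ≠ c := by
    rintro rfl
    exact (mul_self_nonneg _).not_gt hbc
  obtain ⟨t, ht⟩ := exists_eq_lineMap_of_orient_eq_zero hb_ne_c
    (orient_lineMap b c p q s ▸ hs0 : orient b c (AffineMap.lineMap p q s) = 0)
  have ht0 := orient_eq_zero_of_mem_segment (lineMap_mem_segment (𝕜 := ℝ) p q hs)
  rw [ht, orient_lineMap] at ht0
  exact ⟨_, lineMap_mem_segment (𝕜 := ℝ) p q hs,
    ht ▸ lineMap_mem_segment (𝕜 := ℝ) b c (mem_Icc_of_convexComb_eq_zero hbc ht0)⟩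

theorem segment_inter_nonempty_iff {b c p q : ℝ × ℝ} (hb : b ∉ segment ℝ p q)
    (hc : c ∉ segment ℝ p q) (hp : p ∉ segment ℝ b c) (hq : q ∉ segment ℝ b c) :
    (segment ℝ p q ∩ segment ℝ b c).Nonempty ↔
      orient b c p * orient b c q < 0 ∧ orient p q b * orient p q c < 0 := by
  refine ⟨fun ⟨x, hxpq, hxbc⟩ => ⟨?_, ?_⟩,
    fun h => segment_inter_nonempty_of_orient_mul_neg h.1 h.2⟩
  · exact orient_mul_orient_neg_of_mem_segment hxpq hxbc hb hp hq
  · exact orient_mul_orient_neg_of_mem_segment hxbc hxpq hp hb hc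

section
variable {E : Type*} [TopologicalSpace E] [AddCommGroup E] [Module ℝ E] [ContinuousAdd E]
  [ContinuousSMul ℝ E]

lemma isCompact_segment (x y : E) : IsCompact (segment ℝ x y) := by
  rw [segment_eq_image]
  exact isCompact_Icc.image (by fun_prop)

lemma isClosed_setOf_segment_inter_nonempty {X : Type*} [TopologicalSpace X] {f g : X → E}
    (hf : Continuous f) (hg : Continuous g) {K : Set E} (hK : IsClosed K) :
    IsClosed {r | (segment ℝ (f r) (g r) ∩ K).Nonempty} := by
  have h : {r | (segment ℝ (f r) (g r) ∩ K).Nonempty} =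
      Prod.fst '' {p : X × I | (1 - (p.2 : ℝ)) • f p.1 + (p.2 : ℝ) • g p.1 ∈ K} := by
    ext r
    simp only [segment_eq_image, image_inter_nonempty_iff, mem_ofPred_eq, unitInterval,
      mem_image, Prod.exists, exists_and_right, Subtype.exists, mem_Icc, exists_prop,
      exists_eq_right]
    rfl
  rw [h]
  exact isClosedMap_fst_of_compactSpace _ (hK.preimage (by fun_prop))
end

/-- geometric core of Lemma 6: along a continuous family of segments
`[f(r), g(r)]`, if no segment of the family passes through an endpoint of a fixed segment
`[b, c]` and no endpoint `f(r)`, `g(r)` ever lies on `[b, c]`, then either every segment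
of the family meets `[b, c]` or none does. -/
theorem segment_family_intersection_dichotomy
    (f g : I → ℝ × ℝ) (hf : Continuous f) (hg : Continuous g)
    (b c : ℝ × ℝ)
    (h : ∀ r : I, b ∉ segment ℝ (f r) (g r) ∧ c ∉ segment ℝ (f r) (g r) ∧
      f r ∉ segment ℝ b c ∧ g r ∉ segment ℝ b c) :
    {r : I | (segment ℝ (f r) (g r) ∩ segment ℝ b c).Nonempty} = Set.univ ∨
    {r : I | (segment ℝ (f r) (g r) ∩ segment ℝ b c).Nonempty} = ∅ := by
  have hchar : {r : I | (segment ℝ (f r) (g r) ∩ segment ℝ b c).Nonempty} =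
      {r | orient b c (f r) * orient b c (g r) < 0} ∩
        {r | orient (f r) (g r) b * orient (f r) (g r) c < 0} :=
    Set.ext fun r => segment_inter_nonempty_iff (h r).1 (h r).2.1 (h r).2.2.1 (h r).2.2.2
  have hopen : IsOpen {r : I | (segment ℝ (f r) (g r) ∩ segment ℝ b c).Nonempty} :=
    hchar ▸ (isOpen_lt (by fun_prop) continuous_const).inter
      (isOpen_lt (by fun_prop) continuous_const)
  have hclosed := isClosed_setOf_segment_inter_nonempty hf hg (isCompact_segment b c).isClosed
  exact (isClopen_iff.mp ⟨hclosed, hopen⟩).symm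
end

section
/- Let X be a metric space and let f, g : [0,1] → X be continuous curves. Let 0 = s_0 ≤ s_1 ≤ … ≤ s_p = 1 and 0 = t_0 ≤ t_1 ≤ … ≤ t_q = 1, set u_i = f(s_i) and v_j = g(t_j), and suppose the subdivisions have deviation at most η ≥ 0, i.e. for every i and every s ∈ [s_i, s_{i+1}], dist(f(s), f(s_i)) ≤ η and dist(f(s), f(s_{i+1})) ≤ η, and likewise for g on each [t_j, t_{j+1}]. Then δ_dF(u, v) ≤ δ_F(f, g) + η. -/
open unitInterval

/-- A reparametrization: a continuous nondecreasing surjection of `[0,1]` onto itself. -/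
def IsReparam (α : I → I) : Prop :=
  Continuous α ∧ Monotone α ∧ Function.Surjective α

/-- The continuous Fréchet distance between two curves `f, g : [0,1] → X`:
the infimum over all pairs of reparametrizations `(α, β)` of
`sup_{r ∈ [0,1]} dist (f (α r)) (g (β r))`. -/
noncomputable def frechetDist {X : Type*} [MetricSpace X] (f g : I → X) : ℝ :=
  sInf { d | ∃ α β : I → I, IsReparam α ∧ IsReparam β ∧
    d = ⨆ r : I, dist (f (α r)) (g (β r)) }

/-- `IsCoupling p q m a b`: the index pairs `(a 0, b 0), …, (a m, b m)` form a coupling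
between sequences indexed by `0,…,p` and `0,…,q`. -/
def IsCoupling (p q m : ℕ) (a b : ℕ → ℕ) : Prop :=
  a 0 = 0 ∧ b 0 = 0 ∧ a m = p ∧ b m = q ∧
  (∀ l < m, a (l + 1) = a l ∨ a (l + 1) = a l + 1) ∧
  (∀ l < m, b (l + 1) = b l ∨ b (l + 1) = b l + 1)

/-- The discrete Fréchet distance between the finite sequences `u 0, …, u p` and
`v 0, …, v q`, computed with respect to the distance function `d`: the infimum over all
couplings of the maximum of `d` over the coupled pairs. -/
noncomputable def discreteFrechetWith {X : Type*} (d : X → X → ℝ)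
    (p q : ℕ) (u v : ℕ → X) : ℝ :=
  sInf { c | ∃ m : ℕ, ∃ a b : ℕ → ℕ, IsCoupling p q m a b ∧
    c = (Finset.range (m + 1)).sup' Finset.nonempty_range_add_one
      (fun l => d (u (a l)) (v (b l))) }

/-- The discrete Fréchet distance with respect to the metric of `X`. -/
noncomputable def discreteFrechet {X : Type*} [MetricSpace X]
    (p q : ℕ) (u v : ℕ → X) : ℝ :=
  discreteFrechetWith dist p q u v


/-!
Fix reparametrizations `α`, `β` with `sup_r dist (f (α r)) (g (β r)) = D`. Lift the subdivision
points to monotone parameter sequences `r`, `ρ` with `α (r i) = s i` and `β (ρ j) = t j` (via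
monotone sections of `α` and `β`), and merge the two lifts: the merge couples `i` with `j` only
when `[r i, r (i + 1)]` meets `[ρ j, ρ (j + 1)]`. Then one of `r i`, `ρ j` lies in the other's
interval, and a single triangle inequality through that parameter gives
`dist (f (s i)) (g (t j)) ≤ D + η`. To make the merge uniform, the subdivisions are extended
beyond `p` and `q` by the constant `1`.
-/

open Set

lemma isReparam_id : IsReparam id :=
  ⟨continuous_id, monotone_id, Function.surjective_id⟩

namespace IsReparam

variable {α : I → I}

lemma map_zero (hα : IsReparam α) : α 0 = 0 := by
  obtain ⟨x, hx⟩ := hα.2.2 0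
  exact le_antisymm (by simpa [hx] using hα.2.1 (show (0 : I) ≤ x from nonneg')) nonneg'

lemma map_one (hα : IsReparam α) : α 1 = 1 := by
  obtain ⟨x, hx⟩ := hα.2.2 1
  exact le_antisymm le_one' (by simpa [hx] using hα.2.1 (show x ≤ 1 from le_one'))

/-- Any section of a monotone map between linear orders is monotone, so it suffices to fix the
values of a section of `α` at the endpoints. -/
lemma exists_monotone_section (hα : IsReparam α) :
    ∃ γ : I → I, Monotone γ ∧ (∀ y, α (γ y) = y) ∧ γ 0 = 0 ∧ γ 1 = 1 := by
  classical
  let γ : I → I := fun y => if y = 0 then 0 else if y = 1 then 1 else Function.surjInv hα.2.2 y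
  have hsection : ∀ y, α (γ y) = y := by
    intro y
    simp only [γ]
    split_ifs with h0 h1
    · rw [h0, hα.map_zero]
    · rw [h1, hα.map_one]
    · exact Function.surjInv_eq _ y
  refine ⟨γ, fun y y' hyy' => ?_, hsection, by simp [γ], by simp [γ]⟩
  rcases hyy'.eq_or_lt with rfl | hlt
  · exact le_rfl
  · exact (hα.2.1.reflect_lt (by rwa [hsection, hsection])).le

end IsReparam

lemma le_frechetDist {X : Type*} [MetricSpace X] {f g : I → X} {c : ℝ}
    (h : ∀ α β, IsReparam α → IsReparam β → c ≤ ⨆ r, dist (f (α r)) (g (β r))) :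
    c ≤ frechetDist f g :=
  le_csInf ⟨_, id, id, isReparam_id, isReparam_id, rfl⟩ <| by
    rintro _ ⟨α, β, hα, hβ, rfl⟩
    exact h α β hα hβ

namespace IsCoupling

variable {p q m : ℕ} {a b : ℕ → ℕ}

lemma fst_le (h : IsCoupling p q m a b) {l : ℕ} (hl : l ≤ m) : a l ≤ p := by
  obtain ⟨-, -, ham, -, hstep, -⟩ := h
  induction hl using Nat.decreasingInduction with
  | self => exact ham.le
  | of_succ k hk ih => rcases hstep k hk with h | h <;> omega

lemma snd_le (h : IsCoupling p q m a b) {l : ℕ} (hl : l ≤ m) : b l ≤ q := by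
  obtain ⟨-, -, -, hbm, -, hstep⟩ := h
  induction hl using Nat.decreasingInduction with
  | self => exact hbm.le
  | of_succ k hk ih => rcases hstep k hk with h | h <;> omega

lemma step_update {a : ℕ → ℕ} {p p' : ℕ} (ham : a m = p)
    (hstep : ∀ l < m, a (l + 1) = a l ∨ a (l + 1) = a l + 1) (hp : p' = p ∨ p' = p + 1) :
    ∀ l < m + 1, Function.update a (m + 1) p' (l + 1) = Function.update a (m + 1) p' l ∨
      Function.update a (m + 1) p' (l + 1) = Function.update a (m + 1) p' l + 1 := by
  intro l hl
  rw [Function.update_of_ne (by omega : l ≠ m + 1)]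
  rcases (Nat.lt_succ_iff.mp hl).lt_or_eq with hl | rfl
  · rw [Function.update_of_ne (by omega : l + 1 ≠ m + 1)]
    exact hstep l hl
  · rwa [Function.update_self, ham]

lemma snoc (h : IsCoupling p q m a b) {p' q' : ℕ} (hp : p' = p ∨ p' = p + 1)
    (hq : q' = q ∨ q' = q + 1) :
    IsCoupling p' q' (m + 1) (Function.update a (m + 1) p') (Function.update b (m + 1) q') := by
  obtain ⟨ha0, hb0, ham, hbm, hsa, hsb⟩ := h
  exact ⟨by simp [ha0], by simp [hb0], by simp, by simp, step_update ham hsa hp,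
    step_update hbm hsb hq⟩

end IsCoupling

theorem exists_isCoupling_forall {R : ℕ → ℕ → Prop} (h00 : R 0 0)
    (hleft : ∀ i, R (i + 1) 0 → R i 0) (hright : ∀ j, R 0 (j + 1) → R 0 j)
    (hpred : ∀ i j, R (i + 1) (j + 1) → R i (j + 1) ∨ R (i + 1) j) (i j : ℕ) (hij : R i j) :
    ∃ m a b, IsCoupling i j m a b ∧ ∀ l ≤ m, R (a l) (b l) := by
  induction hn : i + j generalizing i j with
  | zero =>
    obtain ⟨rfl, rfl⟩ : i = 0 ∧ j = 0 := by omega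
    exact ⟨0, fun _ => 0, fun _ => 0, ⟨rfl, rfl, rfl, rfl, by simp, by simp⟩,
      fun l _ => h00⟩
  | succ n ih =>
    have extend : ∀ i' j', R i' j' → i' + j' = n → (i = i' ∨ i = i' + 1) →
        (j = j' ∨ j = j' + 1) → ∃ m a b, IsCoupling i j m a b ∧ ∀ l ≤ m, R (a l) (b l) := by
      intro i' j' hR' hn' hi hj
      obtain ⟨m, a, b, hc, hab⟩ := ih i' j' hR' hn'
      refine ⟨m + 1, _, _, hc.snoc hi hj, fun l hl => ?_⟩
      rcases (Nat.le_succ_iff.mp hl) with hl | rfl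
      · rw [Function.update_of_ne (by omega), Function.update_of_ne (by omega)]
        exact hab l hl
      · simpa using hij
    rcases i with _ | i <;> rcases j with _ | j
    · omega
    · exact extend 0 j (hright j hij) (by omega) (by omega) (by omega)
    · exact extend i 0 (hleft i hij) (by omega) (by omega) (by omega)
    · rcases hpred i j hij with h | h
      · exact extend i (j + 1) h (by omega) (by omega) (by omega)
      · exact extend (i + 1) j h (by omega) (by omega) (by omega)

theorem exists_isCoupling_forall_overlap {T : Type*} [LinearOrder T] {r ρ : ℕ → T}
    (hr : Monotone r) (hρ : Monotone ρ) (h0 : r 0 = ρ 0) (i j : ℕ)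
    (hij : r i ≤ ρ (j + 1) ∧ ρ j ≤ r (i + 1)) :
    ∃ m a b, IsCoupling i j m a b ∧ ∀ l ≤ m, r (a l) ≤ ρ (b l + 1) ∧ ρ (b l) ≤ r (a l + 1) := by
  refine exists_isCoupling_forall (R := fun i j => r i ≤ ρ (j + 1) ∧ ρ j ≤ r (i + 1))
    ⟨h0 ▸ hρ (Nat.zero_le 1), h0 ▸ hr (Nat.zero_le 1)⟩ ?_ ?_ ?_ i j hij
  · rintro i ⟨h1, -⟩
    exact ⟨(hr i.le_succ).trans h1, h0 ▸ hr (Nat.zero_le _)⟩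
  · rintro j ⟨-, h2⟩
    exact ⟨h0 ▸ hρ (Nat.zero_le _), (hρ j.le_succ).trans h2⟩
  · rintro i j ⟨h1, h2⟩
    rcases le_total (r (i + 1)) (ρ (j + 1)) with h | h
    · exact Or.inr ⟨h, (hρ j.le_succ).trans h2⟩
    · exact Or.inl ⟨(hr i.le_succ).trans h1, h⟩

theorem discreteFrechetWith_le_of_isCoupling {X : Type*} {d : X → X → ℝ}
    (hd : ∀ x y, 0 ≤ d x y) {p q m : ℕ} {a b : ℕ → ℕ} {u v : ℕ → X}
    (hc : IsCoupling p q m a b) {c : ℝ} (h : ∀ l ≤ m, d (u (a l)) (v (b l)) ≤ c) :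
    discreteFrechetWith d p q u v ≤ c := by
  have hbdd : BddBelow {c | ∃ m a b, IsCoupling p q m a b ∧
      c = (Finset.range (m + 1)).sup' Finset.nonempty_range_add_one
        fun l => d (u (a l)) (v (b l))} := by
    refine ⟨0, ?_⟩
    rintro _ ⟨m', a', b', -, rfl⟩
    exact (hd _ _).trans
      (Finset.le_sup' (fun l => d (u (a' l)) (v (b' l))) (Finset.mem_range.2 m'.succ_pos))
  exact (csInf_le hbdd ⟨m, a, b, hc, rfl⟩).trans
    (Finset.sup'_le _ _ fun l hl => h l (Nat.lt_succ_iff.mp (Finset.mem_range.mp hl)))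

theorem discreteFrechetWith_congr {X : Type*} {d : X → X → ℝ} {p q : ℕ} {u u' v v' : ℕ → X}
    (hu : ∀ i ≤ p, u i = u' i) (hv : ∀ j ≤ q, v j = v' j) :
    discreteFrechetWith d p q u v = discreteFrechetWith d p q u' v' := by
  unfold discreteFrechetWith
  congr 1
  ext c
  refine exists_congr fun m => exists_congr fun a => exists_congr fun b =>
    and_congr_right fun hc => ?_
  rw [Finset.sup'_congr _ rfl fun l hl => ?_]
  have hl : l ≤ m := Nat.lt_succ_iff.mp (Finset.mem_range.mp hl)
  rw [hu _ (hc.fst_le hl), hv _ (hc.snd_le hl)]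

/-- One left endpoint lies in the other interval, and there one curve is within `D` of the other
while the other is within `η` of its value at its own left endpoint. -/
theorem dist_le_add_of_overlap {T X : Type*} [LinearOrder T] [PseudoMetricSpace X]
    {F G : T → X} {D η : ℝ} (hD : ∀ x, dist (F x) (G x) ≤ D) {x₀ x₁ y₀ y₁ : T}
    (hF : ∀ x ∈ Icc x₀ x₁, dist (F x) (F x₀) ≤ η) (hG : ∀ y ∈ Icc y₀ y₁, dist (G y) (G y₀) ≤ η)
    (h₀ : x₀ ≤ y₁) (h₁ : y₀ ≤ x₁) :
    dist (F x₀) (G y₀) ≤ D + η := by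
  rcases le_total y₀ x₀ with h | h
  · calc dist (F x₀) (G y₀) ≤ dist (F x₀) (G x₀) + dist (G x₀) (G y₀) := dist_triangle _ _ _
      _ ≤ D + η := add_le_add (hD x₀) (hG x₀ ⟨h, h₀⟩)
  · calc dist (F x₀) (G y₀) ≤ dist (F x₀) (F y₀) + dist (F y₀) (G y₀) := dist_triangle _ _ _
      _ ≤ η + D := add_le_add (dist_comm (F x₀) _ ▸ hF y₀ ⟨h, h₁⟩) (hD y₀)
      _ = D + η := add_comm _ _

theorem bddAbove_range_dist_comp {K X ι : Type*} [TopologicalSpace K] [CompactSpace K]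
    [PseudoMetricSpace X] {f g : K → X} (hf : Continuous f) (hg : Continuous g) (α β : ι → K) :
    BddAbove (range fun r => dist (f (α r)) (g (β r))) := by
  obtain ⟨C, hC⟩ :=
    Metric.isBounded_iff.mp ((isCompact_range hf).union (isCompact_range hg)).isBounded
  exact ⟨C, forall_mem_range.2 fun r => hC (Or.inl (mem_range_self _)) (Or.inr (mem_range_self _))⟩

theorem dist_comp_le_of_mem_Icc {X : Type*} [PseudoMetricSpace X] {f : I → X} {α γ : I → I}
    (hα : Monotone α) (hγ : ∀ y, α (γ y) = y) {y₀ y₁ : I} {η : ℝ}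
    (hf : ∀ x ∈ Icc y₀ y₁, dist (f x) (f y₀) ≤ η) :
    ∀ x ∈ Icc (γ y₀) (γ y₁), dist (f (α x)) (f (α (γ y₀))) ≤ η := by
  rintro x ⟨h₀, h₁⟩
  rw [hγ]
  exact hf _ ⟨hγ y₀ ▸ hα h₀, hγ y₁ ▸ hα h₁⟩

theorem discreteFrechet_comp_le_iSup_add {X : Type*} [MetricSpace X] {f g : I → X}
    (hf : Continuous f) (hg : Continuous g) {α β : I → I} (hα : IsReparam α) (hβ : IsReparam β)
    {p q : ℕ} {s t : ℕ → I} (hs : Monotone s) (ht : Monotone t) (hs0 : s 0 = 0) (ht0 : t 0 = 0)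
    (hsp : s p = 1) (htq : t q = 1) {η : ℝ}
    (hfs : ∀ i, ∀ x ∈ Icc (s i) (s (i + 1)), dist (f x) (f (s i)) ≤ η)
    (hgt : ∀ j, ∀ x ∈ Icc (t j) (t (j + 1)), dist (g x) (g (t j)) ≤ η) :
    discreteFrechet p q (f ∘ s) (g ∘ t) ≤ (⨆ r, dist (f (α r)) (g (β r))) + η := by
  obtain ⟨γ, hγ, hαγ, hγ0, hγ1⟩ := hα.exists_monotone_section
  obtain ⟨δ, hδ, hβδ, hδ0, hδ1⟩ := hβ.exists_monotone_section
  have hsp' : s (p + 1) = 1 := le_antisymm le_one' (hsp ▸ hs p.le_succ)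
  have htq' : t (q + 1) = 1 := le_antisymm le_one' (htq ▸ ht q.le_succ)
  obtain ⟨m, a, b, hc, hab⟩ :=
    exists_isCoupling_forall_overlap (hγ.comp hs) (hδ.comp ht)
      (by simp [hs0, ht0, hγ0, hδ0]) p q
      ⟨by simp [htq', hδ1, le_one'], by simp [hsp', hγ1, le_one']⟩
  refine discreteFrechetWith_le_of_isCoupling (fun _ _ => dist_nonneg) hc fun l hl => ?_
  have key := dist_le_add_of_overlap (F := f ∘ α) (G := g ∘ β)
    (le_ciSup (bddAbove_range_dist_comp hf hg α β))
    (dist_comp_le_of_mem_Icc hα.2.1 hαγ (hfs (a l)))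
    (dist_comp_le_of_mem_Icc hβ.2.1 hβδ (hgt (b l))) (hab l hl).1 (hab l hl).2
  simpa [hαγ, hβδ] using key

lemma monotone_comp_min {T : Type*} [Preorder T] {s : ℕ → T} {p : ℕ}
    (hs : ∀ i < p, s i ≤ s (i + 1)) : Monotone fun i => s (min i p) :=
  monotone_nat_of_le_succ fun i => by
    rcases lt_or_ge i p with h | h
    · simpa [min_eq_left h.le, min_eq_left (Nat.succ_le_of_lt h)] using hs i h
    · simp [min_eq_right h, min_eq_right (h.trans i.le_succ)]

lemma dist_le_of_mem_Icc_comp_min {T X : Type*} [PartialOrder T] [PseudoMetricSpace X]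
    {f : T → X} {s : ℕ → T} {p : ℕ} {η : ℝ} (hη : 0 ≤ η)
    (hdev : ∀ i < p, ∀ x, s i ≤ x → x ≤ s (i + 1) → dist (f x) (f (s i)) ≤ η) (i : ℕ) :
    ∀ x ∈ Icc (s (min i p)) (s (min (i + 1) p)), dist (f x) (f (s (min i p))) ≤ η := by
  rintro x ⟨h₀, h₁⟩
  rcases lt_or_ge i p with h | h
  · rw [min_eq_left h.le] at h₀ ⊢
    rw [min_eq_left (Nat.succ_le_of_lt h)] at h₁
    exact hdev i h x h₀ h₁
  · rw [min_eq_right h] at h₀ ⊢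
    rw [min_eq_right (h.trans i.le_succ)] at h₁
    simpa [le_antisymm h₁ h₀] using hη

/-- for subdivisions of deviation at most `η`, the discrete Fréchet distance
of the vertex sequences is at most the continuous Fréchet distance plus `η`. -/
theorem discreteFrechet_le_frechetDist_add
    {X : Type*} [MetricSpace X] (f g : I → X) (hf : Continuous f) (hg : Continuous g)
    (p q : ℕ) (s t : ℕ → I)
    (hs0 : s 0 = 0) (hsp : s p = 1) (hsmono : ∀ i < p, s i ≤ s (i + 1))
    (ht0 : t 0 = 0) (htq : t q = 1) (htmono : ∀ j < q, t j ≤ t (j + 1))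
    (η : ℝ) (hη : 0 ≤ η)
    (hdevf : ∀ i < p, ∀ x : I, s i ≤ x → x ≤ s (i + 1) →
      dist (f x) (f (s i)) ≤ η ∧ dist (f x) (f (s (i + 1))) ≤ η)
    (hdevg : ∀ j < q, ∀ x : I, t j ≤ x → x ≤ t (j + 1) →
      dist (g x) (g (t j)) ≤ η ∧ dist (g x) (g (t (j + 1))) ≤ η) :
    discreteFrechet p q (fun i => f (s i)) (fun j => g (t j)) ≤ frechetDist f g + η := by
  have hcongr : discreteFrechet p q (fun i => f (s i)) (fun j => g (t j)) =
      discreteFrechet p q (f ∘ fun i => s (min i p)) (g ∘ fun j => t (min j q)) :=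
    discreteFrechetWith_congr (fun i hi => by simp [min_eq_left hi])
      (fun j hj => by simp [min_eq_left hj])
  rw [hcongr, ← sub_le_iff_le_add]
  refine le_frechetDist fun α β hα hβ => sub_le_iff_le_add.2 <|
    discreteFrechet_comp_le_iSup_add hf hg hα hβ (monotone_comp_min hsmono)
      (monotone_comp_min htmono) (by simpa using hs0) (by simpa using ht0)
      (by simpa using hsp) (by simpa using htq)
      (dist_le_of_mem_Icc_comp_min hη fun i hi x h₀ h₁ => (hdevf i hi x h₀ h₁).1)
      (dist_le_of_mem_Icc_comp_min hη fun j hj x h₀ h₁ => (hdevg j hj x h₀ h₁).1)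
end
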